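/- Let σ : Γ → 2^V be a vertex-induced topological triangulation of a (d−1)-dimensional simplex and let θ be a special l.s.o.p. for K[Γ]. Then L_θ(Γ) is spanned as a K-vector space by the classes of monomials whose underlying face is interior and does not contain any vertex of excess 0 (a vertex j has excess 0 when |σ({j})| = 1). -/

import Mathlib

open Finset MvPolynomial

set_option synthInstance.maxHeartbeats 1000000
set_option maxHeartbeats 4000000

noncomputable section

namespace LocalFace

/-! ## Geometric realization of abstract simplicial complexes -/

/-- The point of `ℝ^n` corresponding to the vertex `j`. -/
def stdPt (n : ℕ) (j : Fin n) : EuclideanSpace ℝ (Fin n) :=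
  EuclideanSpace.single j 1

/-- The geometric simplex spanned by a finite set of vertices. -/
def faceHull {n : ℕ} (F : Finset (Fin n)) : Set (EuclideanSpace ℝ (Fin n)) :=
  convexHull ℝ (stdPt n '' ↑F)

/-- The geometric realization of a collection of faces. -/
def realization {n : ℕ} (S : Set (Finset (Fin n))) : Set (EuclideanSpace ℝ (Fin n)) :=
  ⋃ F ∈ S, faceHull F

/-- The barycenter of a face. -/
def barycenter {n : ℕ} (F : Finset (Fin n)) : EuclideanSpace ℝ (Fin n) :=
  (F.card : ℝ)⁻¹ • ∑ j ∈ F, stdPt n j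

/-- `X` is homeomorphic to a closed ball of dimension `m`. -/
def IsBall {n : ℕ} (X : Set (EuclideanSpace ℝ (Fin n))) (m : ℕ) : Prop :=
  Nonempty (↥X ≃ₜ ↥(Metric.closedBall (0 : EuclideanSpace ℝ (Fin m)) 1))

/-- `x` is a manifold-interior point of the `m`-dimensional ball `X`: it has an
open neighbourhood in `X` homeomorphic to `ℝ^m`. -/
def IsInteriorPt {n : ℕ} (X : Set (EuclideanSpace ℝ (Fin n))) (m : ℕ)
    (x : EuclideanSpace ℝ (Fin n)) : Prop :=
  ∃ U : Set (↥X), IsOpen U ∧ (∃ hx : x ∈ X, (⟨x, hx⟩ : ↥X) ∈ U) ∧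
    Nonempty (↥U ≃ₜ EuclideanSpace ℝ (Fin m))

/-- A topological triangulation `σ : Γ → 2^V` of the `(d-1)`-dimensional simplex on
`V = {1,…,d}`, where `Γ` is a finite abstract simplicial complex with vertex set
`{1,…,n}`.  For every `U ⊆ V` the realization of `Γ_U = σ⁻¹(2^U)` is a ball of
dimension `|U| - 1`, and `σ⁻¹(U)` consists of the interior faces of this ball. -/
structure TopTriangulation (n d : ℕ) where
  faces : Finset (Finset (Fin n))
  empty_mem : ∅ ∈ faces
  down_closed : ∀ F ∈ faces, ∀ G ⊆ F, G ∈ faces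
  vertex_mem : ∀ j : Fin n, {j} ∈ faces
  σ : Finset (Fin n) → Finset (Fin d)
  mono : ∀ ⦃F G : Finset (Fin n)⦄, F ∈ faces → G ∈ faces → F ⊆ G → σ F ⊆ σ G
  sigma_empty_iff : ∀ F ∈ faces, (σ F = ∅ ↔ F = ∅)
  ball : ∀ U : Finset (Fin d), U.Nonempty →
    IsBall (realization {F | F ∈ faces ∧ σ F ⊆ U}) (U.card - 1)
  interior_iff : ∀ U : Finset (Fin d), U.Nonempty → ∀ F ∈ faces, F.Nonempty → σ F ⊆ U →
    (σ F = U ↔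
      IsInteriorPt (realization {F | F ∈ faces ∧ σ F ⊆ U}) (U.card - 1) (barycenter F))

namespace TopTriangulation

variable {n d : ℕ}

/-- A triangulation is vertex-induced if there is no face `G` of `Γ` and proper subset
`F ⊊ σ(G)` such that `σ({j}) ⊆ F` for all vertices `j` of `G`. -/
def VertexInduced (T : TopTriangulation n d) : Prop :=
  ¬ ∃ G ∈ T.faces, ∃ F ⊂ T.σ G, ∀ j ∈ G, T.σ {j} ⊆ F

/-- A triangulation is quasi-geometric if there is no face `G` of `Γ` and proper subset
`F ⊊ σ(G)` with `|F| < |G|` such that `σ({j}) ⊆ F` for all vertices `j` of `G`. -/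
def QuasiGeometric (T : TopTriangulation n d) : Prop :=
  ¬ ∃ G ∈ T.faces, ∃ F ⊂ T.σ G, F.card < G.card ∧ ∀ j ∈ G, T.σ {j} ⊆ F

/-- A face is interior if `σ(F) = V`. -/
def InteriorFace (T : TopTriangulation n d) (F : Finset (Fin n)) : Prop :=
  F ∈ T.faces ∧ T.σ F = Finset.univ

end TopTriangulation

/-! ## h-polynomials and local h-polynomials -/

/-- The `h`-polynomial of the subcomplex `Γ_U = σ⁻¹(2^U)`, a complex of
dimension `|U| - 1`. -/
def hPoly {n d : ℕ} (T : TopTriangulation n d) (U : Finset (Fin d)) : Polynomial ℤ :=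
  ∑ F ∈ T.faces.filter (fun F => T.σ F ⊆ U),
    Polynomial.X ^ F.card * (1 - Polynomial.X) ^ (U.card - F.card)

/-- The local `h`-polynomial `ℓ(Γ; t) = ∑_{U ⊆ V} (-1)^{|V|-|U|} h(Γ_U; t)`. -/
def localHPoly {n d : ℕ} (T : TopTriangulation n d) : Polynomial ℤ :=
  ∑ U : Finset (Fin d), (-1 : Polynomial ℤ) ^ (d - U.card) * hPoly T U

/-! ## Face rings and local face modules -/

variable (K : Type) [Field K] {n d : ℕ}

/-- The squarefree monomial `x^F` attached to a set of vertices. -/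
def faceMonomial (F : Finset (Fin n)) : MvPolynomial (Fin n) K :=
  ∏ j ∈ F, X j

/-- The Stanley–Reisner ideal of `Γ`. -/
def faceIdeal (T : TopTriangulation n d) : Ideal (MvPolynomial (Fin n) K) :=
  Ideal.span {p | ∃ F : Finset (Fin n), F ∉ T.faces ∧ p = faceMonomial K F}

/-- A family `θ` of linear forms is special if `θ i` is supported on the
variables `x_j` with `i ∈ σ({j})`. -/
def IsSpecial (T : TopTriangulation n d) (θ : Fin d → MvPolynomial (Fin n) K) : Prop :=
  ∀ i : Fin d, ∀ e ∈ (θ i).support, ∃ j : Fin n, i ∈ T.σ {j} ∧ e = Finsupp.single j 1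

/-- The ideal of the polynomial ring generated by the Stanley–Reisner relations
together with the linear forms `θ`. -/
def ringRel (T : TopTriangulation n d) (θ : Fin d → MvPolynomial (Fin n) K) :
    Ideal (MvPolynomial (Fin n) K) :=
  faceIdeal K T + Ideal.span (Set.range θ)

/-- The quotient `A_θ(Γ) = K[Γ]/(θ_1, …, θ_d)`. -/
abbrev FaceQuot (T : TopTriangulation n d) (θ : Fin d → MvPolynomial (Fin n) K) : Type :=
  MvPolynomial (Fin n) K ⧸ ringRel K T θ

/-- The quotient map onto `A_θ(Γ)`. -/
def proj (T : TopTriangulation n d) (θ : Fin d → MvPolynomial (Fin n) K) :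
    MvPolynomial (Fin n) K →+* FaceQuot K T θ :=
  Ideal.Quotient.mk (ringRel K T θ)

/-- `θ` is a linear system of parameters: the quotient is a finite-dimensional
vector space. -/
def IsLsop (T : TopTriangulation n d) (θ : Fin d → MvPolynomial (Fin n) K) : Prop :=
  FiniteDimensional K (FaceQuot K T θ)

/-- The total degree of an exponent vector. -/
def degSum {n : ℕ} (e : Fin n →₀ ℕ) : ℕ := e.sum fun _ v => v

/-- The degree `s` part of the local face module `L_θ(Γ)`: the span of the
classes of degree `s` monomials whose underlying face is interior. -/
def Lpart (T : TopTriangulation n d) (θ : Fin d → MvPolynomial (Fin n) K) (s : ℕ) :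
    Submodule K (FaceQuot K T θ) :=
  Submodule.span K {u | ∃ e : Fin n →₀ ℕ,
    degSum e = s ∧ T.InteriorFace e.support ∧ u = proj K T θ (monomial e 1)}

/-- The local face module `L_θ(Γ)`: the image in `A_θ(Γ)` of the ideal of
interior faces. -/
def LIdeal (T : TopTriangulation n d) (θ : Fin d → MvPolynomial (Fin n) K) :
    Ideal (FaceQuot K T θ) :=
  Ideal.span {u | ∃ G : Finset (Fin n), T.InteriorFace G ∧ u = proj K T θ (faceMonomial K G)}

/-- The class of `ℓ = x_1 + ⋯ + x_n`. -/
def ellC (T : TopTriangulation n d) (θ : Fin d → MvPolynomial (Fin n) K) : FaceQuot K T θ :=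
  proj K T θ (∑ j : Fin n, X j)

/-! ### the generic special l.s.o.p. -/

/-- The index type of the variables `a_{i,j}`, `i ∈ σ({j})`. -/
def GenIdx (T : TopTriangulation n d) : Type := {p : Fin d × Fin n // p.1 ∈ T.σ {p.2}}

/-- The field `K = k(a_{i,j} : 1 ≤ j ≤ n, i ∈ σ({j}))`. -/
abbrev GenField (k : Type) [Field k] (T : TopTriangulation n d) : Type :=
  FractionRing (MvPolynomial (GenIdx T) k)

/-- The element `a_{i,j}` of `K`. -/
def genVar (k : Type) [Field k] (T : TopTriangulation n d) (w : GenIdx T) : GenField k T :=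
  algebraMap (MvPolynomial (GenIdx T) k) (GenField k T) (X w)

/-- The generic special l.s.o.p. `θ_i = ∑_{j : i ∈ σ(j)} a_{i,j} x_j`. -/
def thetaGen (k : Type) [Field k] (T : TopTriangulation n d) (i : Fin d) :
    MvPolynomial (Fin n) (GenField k T) :=
  ∑ j : Fin n, if h : i ∈ T.σ {j} then C (genVar k T ⟨(i, j), h⟩) * X j else 0

/-! ## The cone sphere `Γ̂` and its artinian Gorenstein quotient -/

/-- The faces of the sphere `Γ̂`, obtained from `Γ` by adding a cone vertex `c`
(the last element of `Fin (n+1)`) over the boundary of `Γ`. -/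
def hatFaces (T : TopTriangulation n d) : Set (Finset (Fin (n + 1))) :=
  {F | ∃ G ∈ T.faces, F = G.image Fin.castSucc ∨
        (T.σ G ≠ Finset.univ ∧ F = insert (Fin.last n) (G.image Fin.castSucc))}

/-- The Stanley–Reisner ideal of `Γ̂`. -/
def hatFaceIdeal (T : TopTriangulation n d) : Ideal (MvPolynomial (Fin (n + 1)) K) :=
  Ideal.span {p | ∃ F : Finset (Fin (n + 1)), F ∉ hatFaces T ∧ p = ∏ v ∈ F, X v}

/-- The l.s.o.p. `θ̂_i = θ_i - x_c` for `K[Γ̂]`. -/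
def thetaHat (θ : Fin d → MvPolynomial (Fin n) K) (i : Fin d) :
    MvPolynomial (Fin (n + 1)) K :=
  rename Fin.castSucc (θ i) - X (Fin.last n)

def hatRel (T : TopTriangulation n d) (θ : Fin d → MvPolynomial (Fin n) K) :
    Ideal (MvPolynomial (Fin (n + 1)) K) :=
  hatFaceIdeal K T + Ideal.span (Set.range (thetaHat K θ))

/-- The artinian Gorenstein algebra `A_θ̂(Γ̂) = K[Γ̂]/(θ̂_1, …, θ̂_d)`. -/
abbrev HatQuot (T : TopTriangulation n d) (θ : Fin d → MvPolynomial (Fin n) K) : Type :=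
  MvPolynomial (Fin (n + 1)) K ⧸ hatRel K T θ

def projHat (T : TopTriangulation n d) (θ : Fin d → MvPolynomial (Fin n) K) :
    MvPolynomial (Fin (n + 1)) K →+* HatQuot K T θ :=
  Ideal.Quotient.mk (hatRel K T θ)

/-- The class of the cone variable `x_c`. -/
def xc (T : TopTriangulation n d) (θ : Fin d → MvPolynomial (Fin n) K) : HatQuot K T θ :=
  projHat K T θ (X (Fin.last n))

/-- The ideal `(x_c)` of `A_θ̂(Γ̂)`, as a `K`-submodule. -/
def IcSub (T : TopTriangulation n d) (θ : Fin d → MvPolynomial (Fin n) K) :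
    Submodule K (HatQuot K T θ) :=
  Submodule.restrictScalars K (Ideal.span {xc K T θ})

/-- The annihilator of `x_c` in `A_θ̂(Γ̂)`, as a `K`-submodule. -/
def annXc (T : TopTriangulation n d) (θ : Fin d → MvPolynomial (Fin n) K) :
    Submodule K (HatQuot K T θ) :=
  LinearMap.ker (LinearMap.mulLeft K (xc K T θ))

/-- The span in `A_θ̂(Γ̂)` of the classes of the degree `s` monomials (in the
variables of `Γ`) with interior underlying face; this maps isomorphically onto the
degree `s` part of the local face module under `A_θ̂(Γ̂)/(x_c) ≅ A_θ(Γ)`. -/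
def LhatPart (T : TopTriangulation n d) (θ : Fin d → MvPolynomial (Fin n) K) (s : ℕ) :
    Submodule K (HatQuot K T θ) :=
  Submodule.span K {u | ∃ e : Fin n →₀ ℕ, degSum e = s ∧ T.InteriorFace e.support ∧
    u = projHat K T θ (monomial (e.mapDomain Fin.castSucc) 1)}

/-- The class of `ℓ = x_1 + ⋯ + x_n` in `A_θ̂(Γ̂)`. -/
def ellHat (T : TopTriangulation n d) (θ : Fin d → MvPolynomial (Fin n) K) : HatQuot K T θ :=
  projHat K T θ (∑ j : Fin n, X (Fin.castSucc j))


/-! ## Geometric and regular triangulations -/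

/-- The data of a geometric realization of a triangulation `σ : Γ → 2^V` of the
standard `(d-1)`-simplex: vertices of `Γ` are realized as points of the standard
simplex, cells are simplices meeting along common faces and covering the simplex,
and `σ` sends a face to the smallest face of the simplex containing it. -/
structure GeomData {n d : ℕ} (T : TopTriangulation n d) where
  p : Fin n → EuclideanSpace ℝ (Fin d)
  mem_simplex : ∀ j : Fin n, (∀ i, 0 ≤ p j i) ∧ (∑ i, p j i) = 1
  indep : ∀ F ∈ T.faces, AffineIndependent ℝ (fun j : ↥F => p ↑j)
  sigma_eq : ∀ F ∈ T.faces,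
    T.σ F = Finset.univ.filter (fun i : Fin d => ∃ j ∈ F, p j i ≠ 0)
  cover : (⋃ F ∈ T.faces, convexHull ℝ (p '' ↑F)) =
    {x : EuclideanSpace ℝ (Fin d) | (∀ i, 0 ≤ x i) ∧ (∑ i, x i) = 1}
  inter : ∀ F ∈ T.faces, ∀ G ∈ T.faces,
    convexHull ℝ (p '' ↑F) ∩ convexHull ℝ (p '' ↑G) = convexHull ℝ (p '' ↑(F ∩ G))

/-- A triangulation is regular if it admits a geometric realization which is the
projection of the lower faces of the convex hull of the vertices lifted by a
height function: every facet is cut out by an affine functional agreeing with the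
heights on the facet and lying strictly below the heights elsewhere. -/
def TopTriangulation.Regular {n d : ℕ} (T : TopTriangulation n d) : Prop :=
  ∃ D : GeomData T, ∃ ht : Fin n → ℝ,
    ∀ F ∈ T.faces, F.card = d →
      ∃ (w : Fin d → ℝ) (c₀ : ℝ),
        (∀ j ∈ F, (∑ i, w i * D.p j i) + c₀ = ht j) ∧
        (∀ j ∉ F, (∑ i, w i * D.p j i) + c₀ < ht j)

/-! ## The ring `k[x_1,…,x_t]/(x_1^3,…,x_t^3)` -/

/-- The ring `R = k[x_1,…,x_t]/(x_1^3, …, x_t^3)`. -/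
abbrev CubeQuot (k : Type) [Field k] (t : ℕ) : Type :=
  MvPolynomial (Fin t) k ⧸
    Ideal.span {p : MvPolynomial (Fin t) k | ∃ s : Fin t, p = X s ^ 3}

/-- The quotient map onto `R`. -/
def cproj (k : Type) [Field k] (t : ℕ) : MvPolynomial (Fin t) k →+* CubeQuot k t :=
  Ideal.Quotient.mk _

/-- The element `y = ∑ a_s x_s` of `R`. -/
def yEl (k : Type) [Field k] (t : ℕ) (a : Fin t → k) : CubeQuot k t :=
  cproj k t (∑ s : Fin t, C (a s) * X s)

/-- The element `z_m = ∑ a_1^{l_1 - 1} ⋯ a_t^{l_t - 1} x_1^{l_1} ⋯ x_t^{l_t}` of `R`,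
the sum over all `(l_1, …, l_t)` with `l_s ∈ {1, 2}` and `∑ l_s = m`.
(For `m > 2t` this is the empty sum, i.e. `0`.) -/
def zEl (k : Type) [Field k] (t : ℕ) (a : Fin t → k) (m : ℕ) : CubeQuot k t :=
  ∑ l ∈ Finset.univ.filter (fun l : Fin t → Fin 2 => t + ∑ s, (l s : ℕ) = m),
    cproj k t (∏ s : Fin t, (C (a s) ^ (l s : ℕ) * X s ^ ((l s : ℕ) + 1)))


/-!
The local face module is spanned by the classes of the monomials `x^e` with interior support:
a monomial times `x^G`, `G` interior, is either zero in `K[Γ]` or again has interior support.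
Let `j` be a vertex of excess zero in such a support, `σ({j}) = {i}`. The coefficient of `x_j`
in `θ_i` is nonzero, since otherwise `A_θ(Γ)` would surject onto `K[x_j]`; so the relation
`x^(e - e_j) θ_i = 0` expresses `x^e` through the monomials `x^(e - e_j + e_j')` with
`j' ≠ j` and `i ∈ σ({j'})`. Each such `j'` has positive excess, because the `0`-ball `Γ_{i}` is a
single vertex, and vertex-inducedness keeps every nonzero new monomial interior. Induction on
the total exponent of the vertices of excess zero concludes.
-/

lemma stdPt_injective : Function.Injective (stdPt n) := by
  intro j j' h
  by_contra hne
  simpa [stdPt, PiLp.single_apply, hne] using congrArg (fun v => v j) h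

lemma TopTriangulation.eq_of_sigma_subset_singleton (T : TopTriangulation n d) {i : Fin d}
    {j j' : Fin n} (h : T.σ {j} ⊆ {i}) (h' : T.σ {j'} ⊆ {i}) : j = j' := by
  obtain ⟨f⟩ := T.ball {i} (singleton_nonempty i)
  have : Subsingleton (realization {F | F ∈ T.faces ∧ T.σ F ⊆ {i}}) := by
    rw [card_singleton, Nat.sub_self] at f
    exact f.toEquiv.subsingleton
  have hmem : ∀ v, T.σ {v} ⊆ {i} → stdPt n v ∈ realization {F | F ∈ T.faces ∧ T.σ F ⊆ {i}} :=
    fun v hv => Set.mem_biUnion (x := {v}) ⟨T.vertex_mem v, hv⟩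
      (subset_convexHull ℝ _ ⟨v, mem_singleton_self v, rfl⟩)
  exact stdPt_injective (congrArg Subtype.val
    (Subsingleton.elim (⟨_, hmem j h⟩ : realization _) ⟨_, hmem j' h'⟩))

lemma TopTriangulation.InteriorFace.of_subset {T : TopTriangulation n d} {G F : Finset (Fin n)}
    (hG : T.InteriorFace G) (hGF : G ⊆ F) (hF : F ∈ T.faces) : T.InteriorFace F :=
  ⟨hF, univ_subset_iff.mp (hG.2 ▸ T.mono hG.1 hF hGF)⟩

def TopTriangulation.excessZeroDegree (T : TopTriangulation n d) (e : Fin n →₀ ℕ) : ℕ :=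
  ∑ j ∈ univ.filter fun j => (T.σ {j}).card = 1, e j

lemma TopTriangulation.excessZeroDegree_exchange {T : TopTriangulation n d} {j j' : Fin n}
    {e : Fin n →₀ ℕ} (hj : j ∈ e.support) (hj1 : (T.σ {j}).card = 1) (hj'1 : (T.σ {j'}).card ≠ 1) :
    T.excessZeroDegree (e - Finsupp.single j 1 + Finsupp.single j' 1) + 1 =
      T.excessZeroDegree e := by
  have hle : Finsupp.single j 1 ≤ e :=
    Finsupp.single_le_iff.2 (Nat.one_le_iff_ne_zero.2 (Finsupp.mem_support_iff.1 hj))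
  conv_rhs => rw [← tsub_add_cancel_of_le hle]
  simp [excessZeroDegree, sum_add_distrib, Finsupp.single_apply, hj1, hj'1]

lemma TopTriangulation.VertexInduced.sigma_exchange_eq_univ {T : TopTriangulation n d}
    (hvi : T.VertexInduced) {i : Fin d} {j j' : Fin n} (hij : T.σ {j} = {i})
    (hij' : i ∈ T.σ {j'}) {e : Fin n →₀ ℕ} (he : T.InteriorFace e.support)
    (hface : (e - Finsupp.single j 1 + Finsupp.single j' 1).support ∈ T.faces) :
    T.σ (e - Finsupp.single j 1 + Finsupp.single j' 1).support = univ := by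
  set e' := e - Finsupp.single j 1 + Finsupp.single j' 1
  have hσ : ∀ u ∈ e'.support, T.σ {u} ⊆ T.σ e'.support := fun u hu =>
    T.mono (T.vertex_mem u) hface (singleton_subset_iff.2 hu)
  by_contra hne
  refine hvi ⟨e.support, he.1, T.σ e'.support, he.2 ▸ ssubset_univ_iff.2 hne, fun u hu => ?_⟩
  rcases eq_or_ne u j with rfl | huj
  · exact hij ▸ singleton_subset_iff.2 (hσ j' (by simp [e']) hij')
  · exact hσ u (by simp_all [e', Finsupp.single_apply, eq_comm])

def interiorMonomialSpan (T : TopTriangulation n d) (θ : Fin d → MvPolynomial (Fin n) K)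
    (p : Fin n → Prop) : Submodule K (FaceQuot K T θ) :=
  Submodule.span K {u | ∃ e : Fin n →₀ ℕ, T.InteriorFace e.support ∧
    (∀ j ∈ e.support, p j) ∧ u = proj K T θ (monomial e 1)}

section

variable {K}

lemma faceMonomial_eq_monomial (F : Finset (Fin n)) :
    faceMonomial K F = monomial (∑ j ∈ F, Finsupp.single j 1) 1 := by
  rw [faceMonomial, monomial_sum_one]
  rfl

lemma support_sum_single_one (F : Finset (Fin n)) :
    (∑ j ∈ F, Finsupp.single j (1 : ℕ)).support = F := by
  ext a
  simp [Finsupp.finsetSum_apply, Finsupp.single_apply]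

lemma sum_single_one_support_le (e : Fin n →₀ ℕ) :
    ∑ j ∈ e.support, Finsupp.single j (1 : ℕ) ≤ e := by
  intro a
  by_cases h : a ∈ e.support <;>
    simp_all [Finsupp.finsetSum_apply, Finsupp.single_apply, Nat.one_le_iff_ne_zero]

lemma monomial_eq_mul_faceMonomial (e : Fin n →₀ ℕ) :
    monomial e (1 : K) =
      monomial (e - ∑ j ∈ e.support, Finsupp.single j 1) 1 * faceMonomial K e.support := by
  rw [faceMonomial_eq_monomial, monomial_mul, one_mul,
    tsub_add_cancel_of_le (sum_single_one_support_le e)]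

lemma eq_sum_C_coeff_mul_X {σ R : Type*} [Fintype σ] [CommSemiring R] {p : MvPolynomial σ R}
    (hp : ∀ e ∈ p.support, ∃ j, e = Finsupp.single j 1) :
    p = ∑ j, C (coeff (Finsupp.single j 1) p) * X j := by
  classical
  ext e
  simp only [coeff_sum, coeff_C_mul, coeff_X, mul_ite, mul_one, mul_zero]
  by_cases he : ∃ j, e = Finsupp.single j 1
  · obtain ⟨j, rfl⟩ := he
    simp [Finsupp.single_left_inj one_ne_zero]
  · rw [Finset.sum_eq_zero fun j _ => if_neg fun h => he ⟨j, h.symm⟩]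
    exact notMem_support_iff.mp fun h => he (hp e h)

variable (T : TopTriangulation n d) (θ : Fin d → MvPolynomial (Fin n) K)

lemma proj_monomial_eq_zero {e : Fin n →₀ ℕ} (h : e.support ∉ T.faces) :
    proj K T θ (monomial e 1) = 0 := by
  rw [proj, Ideal.Quotient.eq_zero_iff_mem, monomial_eq_mul_faceMonomial, ringRel,
    Ideal.add_eq_sup]
  exact Ideal.mem_sup_left (Ideal.mul_mem_left _ _ (Ideal.subset_span ⟨e.support, h, rfl⟩))

lemma proj_theta (i : Fin d) : proj K T θ (θ i) = 0 := by
  rw [proj, Ideal.Quotient.eq_zero_iff_mem, ringRel, Ideal.add_eq_sup]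
  exact Ideal.mem_sup_right (Ideal.subset_span ⟨i, rfl⟩)

lemma proj_C_mul (a : K) (q : MvPolynomial (Fin n) K) :
    proj K T θ (C a * q) = a • proj K T θ q := by
  rw [← smul_eq_C_mul]
  exact map_smul (Ideal.Quotient.mkₐ K (ringRel K T θ)) a q

variable {T θ}

lemma IsSpecial.eq_sum (hspec : IsSpecial K T θ) (i : Fin d) :
    θ i = ∑ j, C (coeff (Finsupp.single j 1) (θ i)) * X j :=
  eq_sum_C_coeff_mul_X fun e he => (hspec i e he).imp fun _ h => h.2

lemma IsSpecial.coeff_eq_zero (hspec : IsSpecial K T θ) {i : Fin d} {j : Fin n}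
    (h : i ∉ T.σ {j}) : coeff (Finsupp.single j 1) (θ i) = 0 := by
  by_contra hc
  obtain ⟨j', hi', heq⟩ := hspec i _ (mem_support_iff.mpr hc)
  rw [(Finsupp.single_left_inj one_ne_zero).mp heq] at h
  exact h hi'

lemma IsSpecial.ringRel_le_ker_aeval (hspec : IsSpecial K T θ) {i : Fin d} {j : Fin n}
    (hij : T.σ {j} = {i}) (hc : coeff (Finsupp.single j 1) (θ i) = 0) :
    ringRel K T θ ≤ RingHom.ker (aeval (Pi.single j (Polynomial.X : Polynomial K))) := by
  rw [ringRel, Ideal.add_eq_sup, sup_le_iff, faceIdeal, Ideal.span_le, Ideal.span_le]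
  constructor
  · rintro _ ⟨F, hF, rfl⟩
    obtain ⟨v, hv, hvj⟩ : ∃ v ∈ F, v ≠ j := by
      by_contra! hall
      rcases subset_singleton_iff.mp (fun v hv => mem_singleton.mpr (hall v hv)) with rfl | rfl
      exacts [hF T.empty_mem, hF (T.vertex_mem j)]
    simp [faceMonomial, prod_eq_zero hv, hvj]
  · rintro _ ⟨i', rfl⟩
    rw [SetLike.mem_coe, RingHom.mem_ker, hspec.eq_sum i', map_sum]
    refine sum_eq_zero fun j' _ => ?_
    rcases eq_or_ne j' j with rfl | hj'
    · have : coeff (Finsupp.single j' 1) (θ i') = 0 := by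
        rcases eq_or_ne i' i with rfl | hi'
        · exact hc
        · exact hspec.coeff_eq_zero (by simpa [hij] using hi')
      simp [this]
    · simp [hj']

lemma IsSpecial.coeff_ne_zero (hspec : IsSpecial K T θ) (hlsop : IsLsop K T θ) {i : Fin d}
    {j : Fin n} (hij : T.σ {j} = {i}) : coeff (Finsupp.single j 1) (θ i) ≠ 0 := by
  intro hc
  let φ := aeval (R := K) (Pi.single j (Polynomial.X : Polynomial K))
  have hφ : Function.Surjective φ := fun q => ⟨Polynomial.aeval (X j) q, by
    rw [← Polynomial.aeval_algHom_apply, aeval_X, Pi.single_eq_same,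
      Polynomial.aeval_X_left_apply]⟩
  let ψ := Ideal.Quotient.liftₐ (ringRel K T θ) φ fun p hp => hspec.ringRel_le_ker_aeval hij hc hp
  have hψ : Function.Surjective ψ := fun q =>
    let ⟨p, hp⟩ := hφ q
    ⟨Ideal.Quotient.mk _ p, hp⟩
  have : Module.Finite K (FaceQuot K T θ) := hlsop
  exact Polynomial.not_finite (Module.Finite.of_surjective ψ.toLinearMap hψ)

lemma proj_monomial_mem_span_exchange (hspec : IsSpecial K T θ) (hlsop : IsLsop K T θ)
    {i : Fin d} {j : Fin n} (hij : T.σ {j} = {i}) {e : Fin n →₀ ℕ} (hj : j ∈ e.support) :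
    proj K T θ (monomial e 1) ∈ Submodule.span K
      ((fun j' => proj K T θ (monomial (e - Finsupp.single j 1 + Finsupp.single j' 1) 1)) ''
        {j' | j' ≠ j ∧ i ∈ T.σ {j'}}) := by
  set c : Fin n → K := fun j' => coeff (Finsupp.single j' 1) (θ i)
  set v : Fin n → FaceQuot K T θ :=
    fun j' => proj K T θ (monomial (e - Finsupp.single j 1 + Finsupp.single j' 1) 1)
  have hvj : v j = proj K T θ (monomial e 1) := by
    simp only [v]
    rw [tsub_add_cancel_of_le (Finsupp.single_le_iff.2 (Nat.one_le_iff_ne_zero.2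
      (Finsupp.mem_support_iff.1 hj)))]
  have hrel : ∑ j', c j' • v j' = 0 := by
    have hmul : ∀ (a : K) j', monomial (e - Finsupp.single j 1) 1 * (C a * X j') =
        C a * monomial (e - Finsupp.single j 1 + Finsupp.single j' 1) 1 := fun a j' => by
      rw [mul_left_comm, X, monomial_mul, one_mul]
    have := congrArg (fun p => proj K T θ (monomial (e - Finsupp.single j 1) 1 * p))
      (hspec.eq_sum i)
    simp only [mul_sum, hmul] at this
    rw [map_mul, proj_theta, mul_zero, map_sum] at this
    simp only [proj_C_mul] at this
    exact this.symm
  rw [← add_sum_erase _ _ (mem_univ j)] at hrel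
  rw [← hvj, ← inv_smul_smul₀ (hspec.coeff_ne_zero hlsop hij) (v j),
    eq_neg_of_add_eq_zero_left hrel]
  refine Submodule.smul_mem _ _ (neg_mem (Submodule.sum_mem _ fun j' hj' => ?_))
  by_cases hij' : i ∈ T.σ {j'}
  · exact Submodule.smul_mem _ _ (Submodule.subset_span ⟨j', ⟨ne_of_mem_erase hj', hij'⟩, rfl⟩)
  · simp [c, hspec.coeff_eq_zero hij']

lemma restrictScalars_LIdeal_eq_interiorMonomialSpan :
    (LIdeal K T θ).restrictScalars K = interiorMonomialSpan K T θ fun _ => True := by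
  have hspan : Submodule.span K (Set.range fun e => proj K T θ (monomial e 1)) = ⊤ := by
    change Submodule.span K
      (Set.range ((Ideal.Quotient.mkₐ K (ringRel K T θ)).toLinearMap ∘ fun e => monomial e 1)) = ⊤
    rw [Set.range_comp, Submodule.span_image, ← coe_basisMonomials, Module.Basis.span_eq,
      Submodule.map_top, LinearMap.range_eq_top]
    exact Ideal.Quotient.mkₐ_surjective K _
  rw [LIdeal, Ideal.span, ← Submodule.span_smul_of_span_eq_top hspan]
  refine le_antisymm (Submodule.span_le.2 ?_) (Submodule.span_le.2 ?_)
  · rintro _ ⟨_, ⟨v, rfl⟩, _, ⟨G, hG, rfl⟩, rfl⟩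
    dsimp only
    rw [smul_eq_mul, ← map_mul, faceMonomial_eq_monomial, monomial_mul, one_mul]
    set e := v + ∑ j ∈ G, Finsupp.single j 1
    by_cases hface : e.support ∈ T.faces
    · refine Submodule.subset_span ⟨e, hG.of_subset ?_ hface, fun _ _ => trivial, rfl⟩
      simpa [e, support_sum_single_one] using
        Finsupp.support_mono (le_add_self (a := ∑ j ∈ G, Finsupp.single j 1) (b := v))
    · rw [SetLike.mem_coe, proj_monomial_eq_zero T θ hface]
      exact zero_mem _
  · rintro _ ⟨e, he, -, rfl⟩
    rw [monomial_eq_mul_faceMonomial, map_mul]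
    exact Submodule.subset_span ⟨_, ⟨_, rfl⟩, _, ⟨e.support, he, rfl⟩, rfl⟩

lemma proj_monomial_mem_span_excess_ne_zero (hvi : T.VertexInduced) (hspec : IsSpecial K T θ)
    (hlsop : IsLsop K T θ) {e : Fin n →₀ ℕ} (he : T.InteriorFace e.support) :
    proj K T θ (monomial e 1) ∈ interiorMonomialSpan K T θ fun j => (T.σ {j}).card ≠ 1 := by
  induction hw : T.excessZeroDegree e using Nat.strong_induction_on generalizing e with
  | _ w ih =>
  by_cases hex : ∀ j ∈ e.support, (T.σ {j}).card ≠ 1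
  · exact Submodule.subset_span ⟨e, he, hex, rfl⟩
  push Not at hex
  obtain ⟨j, hj, hj1⟩ := hex
  obtain ⟨i, hij⟩ := card_eq_one.mp hj1
  refine Submodule.span_le.2 ?_ (proj_monomial_mem_span_exchange hspec hlsop hij hj)
  rintro _ ⟨j', ⟨hj'j, hij'⟩, rfl⟩
  dsimp only
  by_cases hface : (e - Finsupp.single j 1 + Finsupp.single j' 1).support ∈ T.faces
  · have hj'1 : (T.σ {j'}).card ≠ 1 := fun h => hj'j <|
      T.eq_of_sigma_subset_singleton (fun x hx => mem_singleton.2 (card_le_one.1 h.le x hx i hij'))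
        hij.le
    have hlt := T.excessZeroDegree_exchange hj hj1 hj'1
    exact ih _ (by omega) ⟨hface, hvi.sigma_exchange_eq_univ hij hij' he hface⟩ rfl
  · rw [SetLike.mem_coe, proj_monomial_eq_zero T θ hface]
    exact zero_mem _

end

/-- Let `σ : Γ → 2^V` be a vertex-induced triangulation of a
`(d-1)`-dimensional simplex and `θ` a special l.s.o.p. for `K[Γ]`.  Then the local
face module `L_θ(Γ)` is spanned as a `K`-vector space by the classes of the
monomials whose underlying face is interior and contains no vertex of excess `0`
(i.e. no vertex `j` with `|σ({j})| = 1`). -/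
theorem localFaceModule_spanned_by_no_excess_zero (K : Type) [Field K] {n d : ℕ}
    (T : TopTriangulation n d) (hvi : T.VertexInduced)
    (θ : Fin d → MvPolynomial (Fin n) K) (hspec : IsSpecial K T θ)
    (hlsop : IsLsop K T θ) :
    Submodule.restrictScalars K (LIdeal K T θ) =
      Submodule.span K {u | ∃ e : Fin n →₀ ℕ, T.InteriorFace e.support ∧
        (∀ j ∈ e.support, (T.σ {j}).card ≠ 1) ∧ u = proj K T θ (monomial e 1)} := by
  rw [restrictScalars_LIdeal_eq_interiorMonomialSpan]
  refine le_antisymm (Submodule.span_le.2 ?_) (Submodule.span_mono ?_)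
  · rintro _ ⟨e, he, -, rfl⟩
    exact proj_monomial_mem_span_excess_ne_zero hvi hspec hlsop he
  · rintro _ ⟨e, he, -, rfl⟩
    exact ⟨e, he, fun _ _ => trivial, rfl⟩

end LocalFace
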